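/- Let s be the root in (1, √2] of the polynomial x^5 - 2x^4 + 2x^3 - 2x^2 + 2x - 2. Then for every integer n ≥ 2, s^n is not a Garsia number. -/

import Mathlib

/-!
If `s ^ n` were a Garsia number, its minimal polynomial would have constant term `± 2`, since all
its roots lie outside the unit circle. Computing the norm of `s ^ n` from `ℚ(s)` in two ways, as
`(± 2) ^ n` and as `(± 2) ^ [ℚ(s) : ℚ(s ^ n)]`, shows that `n` divides `[ℚ(s) : ℚ] = 5`, so `n = 5`
and `s ^ 5` is rational, hence equal to `2`. But then `T(s) = 0` forces `s (s - 1) (s ^ 2 + 1) = 0`.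
-/
open Polynomial

/-- A Garsia number: an algebraic integer in `(1,2]` with all conjugates strictly outside
the unit circle and Mahler measure `2`. -/
def IsGarsia (x : ℝ) : Prop :=
  1 < x ∧ x ≤ 2 ∧ IsIntegral ℤ x ∧
  (∀ z ∈ ((minpoly ℤ x).map (Int.castRingHom ℂ)).roots, 1 < ‖z‖) ∧
  (((minpoly ℤ x).map (Int.castRingHom ℂ)).roots.map
    (fun z => max ‖z‖ 1)).prod = 2

open IntermediateField Module

theorem Polynomial.Monic.norm_coeff_zero_eq_prod_max_norm_roots {p : ℂ[X]} (hp : p.Monic)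
    (hroots : ∀ z ∈ p.roots, 1 ≤ ‖z‖) :
    ‖p.coeff 0‖ = (p.roots.map fun z => max ‖z‖ 1).prod := by
  rw [(IsAlgClosed.splits p).coeff_zero_eq_prod_roots_of_monic hp, norm_mul, norm_pow, norm_neg,
    norm_one, one_pow, one_mul]
  calc ‖p.roots.prod‖ = (p.roots.map (normHom : ℂ →*₀ ℝ)).prod :=
        map_multiset_prod (normHom : ℂ →*₀ ℝ) _
    _ = _ := congrArg _ (Multiset.map_congr rfl fun z hz => (max_eq_left (hroots z hz)).symm)

theorem IsGarsia.abs_coeff_zero_minpoly {x : ℝ} (hx : IsGarsia x) :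
    |(minpoly ℚ x).coeff 0| = 2 := by
  obtain ⟨-, -, hint, hroots, hprod⟩ := hx
  have hnorm := Monic.norm_coeff_zero_eq_prod_max_norm_roots
    ((minpoly.monic hint).map (Int.castRingHom ℂ)) fun z hz => (hroots z hz).le
  rw [hprod, coeff_map, eq_intCast, Complex.norm_intCast] at hnorm
  rw [minpoly.isIntegrallyClosed_eq_field_fractions' ℚ hint, coeff_map, eq_intCast, ← Int.cast_abs]
  exact_mod_cast hnorm

section Norm

variable {F L : Type*} [Field F] [Field L] [Algebra F L]

theorem finrank_adjoin_mul_natDegree_minpoly [FiniteDimensional F L] (y : L) :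
    finrank F⟮y⟯ L * (minpoly F y).natDegree = finrank F L := by
  rw [← adjoin.finrank (IsIntegral.of_finite F y), mul_comm, finrank_mul_finrank]

variable [LinearOrder F] [IsStrictOrderedRing F]

theorem abs_norm_gen_eq_abs_coeff_zero_minpoly {x : L} (hx : IsIntegral F x) :
    |Algebra.norm F (AdjoinSimple.gen F x)| = |(minpoly F x).coeff 0| := by
  rw [← adjoin.powerBasis_gen hx, Algebra.PowerBasis.norm_gen_eq_coeff_zero_minpoly,
    adjoin.powerBasis_gen, minpoly_gen, abs_mul, abs_pow, abs_neg, abs_one, one_pow, one_mul]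

theorem abs_norm_eq_abs_coeff_zero_minpoly_pow [FiniteDimensional F L] (y : L) :
    |Algebra.norm F y| = |(minpoly F y).coeff 0| ^ finrank F⟮y⟯ L := by
  rw [Algebra.norm_eq_norm_adjoin F y, abs_pow,
    abs_norm_gen_eq_abs_coeff_zero_minpoly (IsIntegral.of_finite F y)]

theorem mul_natDegree_minpoly_pow_eq {x : L} (hx : IsIntegral F x) {n : ℕ}
    (hc : 1 < |(minpoly F x).coeff 0|)
    (hcn : |(minpoly F (x ^ n)).coeff 0| = |(minpoly F x).coeff 0|) :
    n * (minpoly F (x ^ n)).natDegree = (minpoly F x).natDegree := by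
  have : FiniteDimensional F F⟮x⟯ := adjoin.finiteDimensional hx
  set t := AdjoinSimple.gen F x
  have hmin_pow : minpoly F (t ^ n) = minpoly F (x ^ n) := by
    rw [← minpoly.algebraMap_eq (algebraMap F⟮x⟯ L).injective, map_pow,
      AdjoinSimple.algebraMap_gen]
  have hnorm := abs_norm_eq_abs_coeff_zero_minpoly_pow (F := F) (t ^ n)
  rw [map_pow, abs_pow, abs_norm_gen_eq_abs_coeff_zero_minpoly hx, hmin_pow, hcn] at hnorm
  have hn : n = finrank F⟮t ^ n⟯ F⟮x⟯ :=
    pow_right_injective₀ (zero_lt_one.trans hc) hc.ne' hnorm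
  rw [← adjoin.finrank hx, ← hmin_pow, ← finrank_adjoin_mul_natDegree_minpoly (t ^ n), ← hn]

end Norm

noncomputable def specialQuintic : ℤ[X] := X ^ 5 - 2 * X ^ 4 + 2 * X ^ 3 - 2 * X ^ 2 + 2 * X - 2

theorem specialQuintic_natDegree : specialQuintic.natDegree = 5 := by
  unfold specialQuintic; compute_degree!

theorem specialQuintic_monic : specialQuintic.Monic := by
  unfold specialQuintic; monicity!

theorem specialQuintic_coeff_zero : specialQuintic.coeff 0 = -2 := by
  simp [specialQuintic, coeff_X_pow, coeff_X]

theorem specialQuintic_irreducible : Irreducible specialQuintic := by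
  have hdeg : specialQuintic.degree = 5 := by
    rw [degree_eq_natDegree specialQuintic_monic.ne_zero, specialQuintic_natDegree]; rfl
  refine irreducible_of_eisenstein_criterion (P := Ideal.span {(2 : ℤ)})
    ((Ideal.span_singleton_prime two_ne_zero).mpr Int.prime_two) ?_ ?_ (by rw [hdeg]; decide) ?_
    specialQuintic_monic.isPrimitive
  · rw [specialQuintic_monic.leadingCoeff, Ideal.mem_span_singleton]; decide
  · intro n hn
    rw [hdeg] at hn
    have hn5 : n < 5 := by exact_mod_cast hn
    rw [Ideal.mem_span_singleton]
    interval_cases n <;> simp [specialQuintic, coeff_X_pow, coeff_X]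
  · rw [Ideal.span_singleton_pow, Ideal.mem_span_singleton, specialQuintic_coeff_zero]; decide

theorem minpoly_eq_specialQuintic {s : ℝ} (hs : aeval s specialQuintic = 0) :
    minpoly ℚ s = specialQuintic.map (algebraMap ℤ ℚ) := by
  refine (minpoly.eq_of_irreducible_of_monic ?_ (by rwa [aeval_map_algebraMap])
    (specialQuintic_monic.map _)).symm
  exact (IsPrimitive.Int.irreducible_iff_irreducible_map_cast
    specialQuintic_monic.isPrimitive).mp specialQuintic_irreducible

theorem pow_five_ne_two_of_aeval_specialQuintic {s : ℝ} (hs : 1 < s)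
    (hT : aeval s specialQuintic = 0) : s ^ 5 ≠ 2 := by
  intro h5
  simp only [specialQuintic, map_sub, map_add, map_mul, map_pow, aeval_X, map_ofNat] at hT
  have : s * (s - 1) * (s ^ 2 + 1) = 0 := by linear_combination (-1 / 2 : ℝ) * (hT - h5)
  have : 0 < s * (s - 1) * (s ^ 2 + 1) := by
    have := sub_pos.mpr hs
    positivity
  linarith

theorem IsGarsia.eq_two_of_natDegree_minpoly_eq_one {x : ℝ} (hx : IsGarsia x)
    (hdeg : (minpoly ℚ x).natDegree = 1) : x = 2 := by
  obtain ⟨q, rfl⟩ := minpoly.natDegree_eq_one_iff.mp hdeg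
  have hq := hx.abs_coeff_zero_minpoly
  rw [minpoly.eq_X_sub_C, coeff_sub, coeff_X_zero, coeff_C_zero, zero_sub, abs_neg] at hq
  have hpos : 0 < q := by simpa using zero_lt_one.trans hx.1
  rw [abs_of_pos hpos] at hq
  simp [hq]

theorem power_of_special_garsia_not_garsia_general (s : ℝ)
    (h1 : 1 < s)
    (hroot : aeval s ((X : ℤ[X])^5 - 2*X^4 + 2*X^3 - 2*X^2 + 2*X - 2) = 0) :
    ∀ n : ℕ, 2 ≤ n → ¬ IsGarsia (s ^ n) := by
  intro n hn hG
  have hT : aeval s specialQuintic = 0 := hroot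
  have hmin := minpoly_eq_specialQuintic hT
  have hint : IsIntegral ℚ s :=
    minpoly.ne_zero_iff.mp (hmin ▸ (specialQuintic_monic.map _).ne_zero)
  have hdeg : (minpoly ℚ s).natDegree = 5 := by
    rw [hmin, specialQuintic_monic.natDegree_map, specialQuintic_natDegree]
  have hc : |(minpoly ℚ s).coeff 0| = 2 := by
    rw [hmin, coeff_map, specialQuintic_coeff_zero]; norm_num
  have hmul := mul_natDegree_minpoly_pow_eq hint (hc ▸ one_lt_two)
    (hG.abs_coeff_zero_minpoly.trans hc.symm)
  rw [hdeg] at hmul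
  obtain rfl : n = 5 :=
    (Nat.prime_five.eq_one_or_self_of_dvd n ⟨_, hmul.symm⟩).resolve_left (by omega)
  exact pow_five_ne_two_of_aeval_specialQuintic h1 hT
    (hG.eq_two_of_natDegree_minpoly_eq_one (by omega))

/-- Let `s` be the root in `(1, √2]` of `x^5 - 2x^4 + 2x^3 - 2x^2 + 2x - 2`. Then for every
integer `n ≥ 2`, `s^n` is not a Garsia number. -/
theorem power_of_special_garsia_not_garsia (s : ℝ)
    (h1 : 1 < s) (h2 : s ≤ Real.sqrt 2)
    (hroot : aeval s ((X : ℤ[X])^5 - 2*X^4 + 2*X^3 - 2*X^2 + 2*X - 2) = 0) :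
    ∀ n : ℕ, 2 ≤ n → ¬ IsGarsia (s ^ n) :=
  power_of_special_garsia_not_garsia_general s h1 hroot
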